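/- arXiv:2511.21112 — 2 statements merged into one kernel-verified Lean document; each statement's English description precedes it below -/
import Mathlib

section
/- Let G be a finite simple graph with exactly one full vertex and with minimum degree δ(G) = 1. If the coalition number C(G) equals s with s ≥ 2, then the coalition count satisfies c(G) = s − 2. -/
open scoped Classical

/-- A dominating set (as a finset): every vertex outside `S` has a neighbor in `S`. -/
def IsDomSet {V : Type*} (G : SimpleGraph V) (S : Finset V) : Prop :=
  ∀ v, v ∉ S → ∃ u ∈ S, G.Adj u v

/-- Two (distinct) sets form a coalition: neither dominates, but their union does. -/
def IsCoalition {V : Type*} (G : SimpleGraph V) (A B : Finset V) : Prop :=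
  A ≠ B ∧ ¬ IsDomSet G A ∧ ¬ IsDomSet G B ∧ IsDomSet G (A ∪ B)

/-- A coalition partition (c-partition) of the vertex set of `G`. -/
def IsCPartition {V : Type*} [Fintype V] (G : SimpleGraph V) (π : Finset (Finset V)) : Prop :=
  (∀ A ∈ π, A.Nonempty) ∧
  (∀ A ∈ π, ∀ B ∈ π, A ≠ B → Disjoint A B) ∧
  (∀ v : V, ∃ A ∈ π, v ∈ A) ∧
  (∀ A ∈ π, (∃ v, A = {v} ∧ IsDomSet G A) ∨ ∃ B ∈ π, IsCoalition G A B)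

/-- Number of distinct (unordered) coalitions in the partition `π`. -/
noncomputable def cpCount {V : Type*} [Fintype V] (G : SimpleGraph V)
    (π : Finset (Finset V)) : ℕ :=
  ((π ×ˢ π).filter (fun p => IsCoalition G p.1 p.2)).card / 2

/-- The coalition count `c(G)`: maximum number of distinct coalitions over c-partitions. -/
noncomputable def coalitionCount {V : Type*} [Fintype V] (G : SimpleGraph V) : ℕ :=
  sSup {k | ∃ π, IsCPartition G π ∧ k = cpCount G π}

/-- The coalition number `C(G)`: maximum order of a c-partition. -/
noncomputable def coalitionNumber {V : Type*} [Fintype V] (G : SimpleGraph V) : ℕ :=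
  sSup {k | ∃ π, IsCPartition G π ∧ k = π.card}

/-- The coalition graph `CG(G, π)`. -/
def coalitionGraph {V : Type*} (G : SimpleGraph V) (π : Finset (Finset V)) :
    SimpleGraph {A // A ∈ π} where
  Adj A B := IsCoalition G A.1 B.1
  symm := by
    constructor
    rintro A B ⟨h1, h2, h3, h4⟩
    exact ⟨fun h => h1 h.symm, h3, h2, by rwa [Finset.union_comm]⟩
  loopless := by
    constructor
    rintro A ⟨h1, -⟩
    exact h1 rfl

/-- The set of full vertices (vertices of degree `n - 1`). -/
noncomputable def fullVertices {V : Type*} [Fintype V] (G : SimpleGraph V) : Finset V :=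
  Finset.univ.filter (fun v => G.degree v = Fintype.card V - 1)

/-- The domatic number: maximum order of a partition into dominating sets. -/
noncomputable def domaticNumber {V : Type*} [Fintype V] (G : SimpleGraph V) : ℕ :=
  sSup {k | ∃ P : Finset (Finset V),
    (∀ A ∈ P, A.Nonempty) ∧
    (∀ A ∈ P, ∀ B ∈ P, A ≠ B → Disjoint A B) ∧
    (∀ v : V, ∃ A ∈ P, v ∈ A) ∧
    (∀ A ∈ P, IsDomSet G A) ∧ k = P.card}

/-- The independence number of `G`. -/
noncomputable def indepNumber {V : Type*} [Fintype V] (G : SimpleGraph V) : ℕ :=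
  sSup {k | ∃ s : Finset V, (∀ a ∈ s, ∀ b ∈ s, ¬ G.Adj a b) ∧ k = s.card}

/-!
Let `v` be the full vertex and `u` a leaf; `u ≠ v`, since otherwise `G` would have two
vertices, both full. So `v` is the only neighbour of `u`, and every dominating set contains `u`
or `v`. In a c-partition `π` the class of `v` dominates, hence is the singleton `{v}` and lies in
no coalition; so every coalition contains the class `A` of `u`, and every class other than `{v}`
and `A` is in a coalition, necessarily with `A`. Thus every c-partition `π` has exactly
`|π| - 2` coalitions, and maximizing over `π` gives `c(G) = C(G) - 2`.
-/

open Finset SimpleGraph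

variable {V : Type*}

lemma mem_fullVertices [Fintype V] {G : SimpleGraph V} {v : V} :
    v ∈ fullVertices G ↔ G.IsUniversal v := by
  simp [fullVertices]

lemma ne_of_fullVertices_eq_singleton [Fintype V] {G : SimpleGraph V} {u v : V}
    (hfull : fullVertices G = {v}) (hu : G.degree u = 1) : u ≠ v := by
  rintro rfl
  obtain ⟨x, hux, -⟩ := degree_eq_one_iff_existsUnique_adj.1 hu
  have hcard : G.degree u = Fintype.card V - 1 := by
    simpa [fullVertices] using hfull.ge (mem_singleton_self u)
  have hx_pos : 0 < G.degree x := G.degree_pos_iff_exists_adj x |>.2 ⟨u, hux.symm⟩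
  have hx_lt := G.degree_lt_card_verts x
  have hx : x ∈ fullVertices G := by
    simp only [fullVertices, mem_filter, mem_univ, true_and]
    omega
  rw [hfull, mem_singleton] at hx
  exact G.loopless.irrefl u (hx ▸ hux)

lemma IsCoalition.symm {G : SimpleGraph V} {A B : Finset V} (h : IsCoalition G A B) :
    IsCoalition G B A :=
  ⟨h.1.symm, h.2.2.1, h.2.1, by rw [union_comm]; exact h.2.2.2⟩

lemma IsDomSet.of_isUniversal {G : SimpleGraph V} {v : V} {S : Finset V} (hv : G.IsUniversal v)
    (hvS : v ∈ S) : IsDomSet G S :=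
  fun _ hw => ⟨v, hvS, hv (ne_of_mem_of_not_mem hvS hw)⟩

lemma IsDomSet.mem_or_mem {G : SimpleGraph V} {u v : V} {S : Finset V}
    (hu : ∀ w, G.Adj w u → w = v) (hS : IsDomSet G S) : v ∈ S ∨ u ∈ S := by
  by_cases huS : u ∈ S
  · exact .inr huS
  obtain ⟨w, hwS, hwu⟩ := hS u huS
  exact .inl (hu w hwu ▸ hwS)

lemma coalitionCount_eq_coalitionNumber_sub [Fintype V] {G : SimpleGraph V} (k : ℕ)
    (h : ∀ π, IsCPartition G π → cpCount G π = #π - k) :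
    coalitionCount G = coalitionNumber G - k := by
  set orders := {n | ∃ π, IsCPartition G π ∧ n = #π}
  have hcounts : {n | ∃ π, IsCPartition G π ∧ n = cpCount G π} = (· - k) '' orders := by
    ext n
    constructor
    · rintro ⟨π, hπ, rfl⟩
      exact ⟨_, ⟨π, hπ, rfl⟩, (h π hπ).symm⟩
    · rintro ⟨_, ⟨π, hπ, rfl⟩, rfl⟩
      exact ⟨π, hπ, (h π hπ).symm⟩
  have hbdd : BddAbove orders :=
    ⟨Fintype.card (Finset V), by rintro _ ⟨π, -, rfl⟩; exact card_le_univ π⟩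
  rw [coalitionCount, coalitionNumber, hcounts]
  change sSup ((· - k) '' orders) = sSup orders - k
  rcases orders.eq_empty_or_nonempty with hempty | hne
  · simp [hempty]
  · exact (Monotone.map_csSup_of_continuousAt continuous_of_discreteTopology.continuousAt
      (fun _ _ hab => Nat.sub_le_sub_right hab k) hne hbdd).symm

namespace IsCPartition

variable [Fintype V] {G : SimpleGraph V} {π : Finset (Finset V)} {A B : Finset V} {u v : V}

lemma eq_of_mem_of_mem (hπ : IsCPartition G π) (hA : A ∈ π) (hB : B ∈ π) {x : V}
    (hxA : x ∈ A) (hxB : x ∈ B) : A = B := by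
  by_contra hAB
  exact disjoint_left.1 (hπ.2.1 A hA B hB hAB) hxA hxB

lemma exists_eq_singleton_of_isDomSet (hπ : IsCPartition G π) (hA : A ∈ π)
    (hdom : IsDomSet G A) : ∃ x, A = {x} := by
  rcases hπ.2.2.2 A hA with ⟨x, rfl, -⟩ | ⟨B, -, hAB⟩
  · exact ⟨x, rfl⟩
  · exact absurd hdom hAB.2.1

lemma singleton_mem_of_isUniversal (hπ : IsCPartition G π) (hv : G.IsUniversal v) :
    {v} ∈ π := by
  obtain ⟨A, hA, hvA⟩ := hπ.2.2.1 v
  obtain ⟨x, rfl⟩ := hπ.exists_eq_singleton_of_isDomSet hA (.of_isUniversal hv hvA)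
  rwa [mem_singleton.1 hvA]

lemma eq_or_eq_of_isCoalition {Au : Finset V} (hπ : IsCPartition G π) (hv : G.IsUniversal v)
    (hu : ∀ w, G.Adj w u → w = v) (hAu : Au ∈ π) (huAu : u ∈ Au)
    (hA : A ∈ π) (hB : B ∈ π) (hAB : IsCoalition G A B) : A = Au ∨ B = Au := by
  have hvA : v ∉ A := fun h => hAB.2.1 (.of_isUniversal hv h)
  have hvB : v ∉ B := fun h => hAB.2.2.1 (.of_isUniversal hv h)
  rcases hAB.2.2.2.mem_or_mem hu with h | h
  · simp [hvA, hvB] at h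
  · rcases mem_union.1 h with h | h
    · exact .inl (hπ.eq_of_mem_of_mem hA hAu h huAu)
    · exact .inr (hπ.eq_of_mem_of_mem hB hAu h huAu)

lemma isCoalition_of_ne {Au : Finset V} (hπ : IsCPartition G π) (hv : G.IsUniversal v)
    (hu : ∀ w, G.Adj w u → w = v) (hAu : Au ∈ π) (huAu : u ∈ Au)
    (hB : B ∈ π) (hBv : B ≠ {v}) (hBu : B ≠ Au) : IsCoalition G B Au := by
  rcases hπ.2.2.2 B hB with ⟨x, rfl, hdom⟩ | ⟨C, hC, hBC⟩
  · rcases hdom.mem_or_mem hu with h | h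
    · exact absurd (by rw [mem_singleton.1 h]) hBv
    · exact absurd (hπ.eq_of_mem_of_mem hB hAu h huAu) hBu
  · rcases hπ.eq_or_eq_of_isCoalition hv hu hAu huAu hB hC hBC with h | rfl
    · exact absurd h hBu
    · exact hBC

lemma cpCount_eq_card_sub_two (hπ : IsCPartition G π) (hv : G.IsUniversal v)
    (hu : ∀ w, G.Adj w u → w = v) (huv : u ≠ v) : cpCount G π = #π - 2 := by
  obtain ⟨Au, hAu, huAu⟩ := hπ.2.2.1 u
  have hvπ := hπ.singleton_mem_of_isUniversal hv
  have hAuv : Au ≠ {v} := by rintro rfl; exact huv (mem_singleton.1 huAu)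
  set rest := (π.erase {v}).erase Au
  have hnotdom : ∀ {A B : Finset V}, IsCoalition G A B → A ≠ {v} :=
    fun hAB hA => hAB.2.1 (.of_isUniversal hv (hA ▸ mem_singleton_self v))
  have hcoalitions : (π ×ˢ π).filter (fun p => IsCoalition G p.1 p.2)
      = {Au} ×ˢ rest ∪ rest ×ˢ {Au} := by
    ext ⟨A, B⟩
    simp only [mem_filter, mem_product, mem_union, mem_singleton, mem_erase, rest]
    constructor
    · rintro ⟨⟨hA, hB⟩, hAB⟩
      rcases hπ.eq_or_eq_of_isCoalition hv hu hAu huAu hA hB hAB with rfl | rfl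
      · exact .inl ⟨rfl, hAB.1.symm, hnotdom hAB.symm, hB⟩
      · exact .inr ⟨⟨hAB.1, hnotdom hAB, hA⟩, rfl⟩
    · rintro (⟨rfl, hBu, hBv, hB⟩ | ⟨⟨hAAu, hAv, hA⟩, rfl⟩)
      · exact ⟨⟨hAu, hB⟩, (hπ.isCoalition_of_ne hv hu hAu huAu hB hBv hBu).symm⟩
      · exact ⟨⟨hA, hAu⟩, hπ.isCoalition_of_ne hv hu hAu huAu hA hAv hAAu⟩
  have hdisj : Disjoint ({Au} ×ˢ rest) (rest ×ˢ {Au}) :=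
    disjoint_product.2 (.inl (disjoint_singleton_left.2 (by simp [rest])))
  have hrest : #rest = #π - 2 := by
    rw [card_erase_of_mem (mem_erase.2 ⟨hAuv, hAu⟩), card_erase_of_mem hvπ]
    omega
  rw [cpCount, hcoalitions, card_union_of_disjoint hdisj, card_product, card_product,
    card_singleton, hrest]
  omega

end IsCPartition

theorem stmt_7_general {V : Type} [Fintype V] (G : SimpleGraph V) (s : ℕ)
    (hfull : (fullVertices G).card = 1)
    (hdelta : G.minDegree = 1)
    (hC : coalitionNumber G = s) :
    coalitionCount G = s - 2 := by
  obtain ⟨v, hfull_eq⟩ := card_eq_one.1 hfull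
  have hv : G.IsUniversal v := mem_fullVertices.1 (hfull_eq ▸ mem_singleton_self v)
  have : Nonempty V := ⟨v⟩
  obtain ⟨u, hdeg⟩ := G.exists_minimal_degree_vertex
  rw [hdelta] at hdeg
  have huv := ne_of_fullVertices_eq_singleton hfull_eq hdeg.symm
  obtain ⟨x, -, hx⟩ := degree_eq_one_iff_existsUnique_adj.1 hdeg.symm
  have hu : ∀ w, G.Adj w u → w = v :=
    fun w hw => (hx w hw.symm).trans (hx v (hv huv.symm).symm).symm
  rw [← hC]
  exact coalitionCount_eq_coalitionNumber_sub 2 fun _ hπ => hπ.cpCount_eq_card_sub_two hv hu huv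

/-- If `G` has exactly one full vertex, `δ(G) = 1`, and `C(G) = s ≥ 2`,
then `c(G) = s - 2`. -/
theorem stmt_7 {V : Type} [Fintype V] (G : SimpleGraph V) (s : ℕ)
    (hfull : (fullVertices G).card = 1)
    (hdelta : G.minDegree = 1)
    (hs : 2 ≤ s) (hC : coalitionNumber G = s) :
    coalitionCount G = s - 2 :=
  stmt_7_general G s hfull hdelta hC
end

section
/- The coalition number of the cycle C_4 on four vertices equals 4, i.e., C(C_4) = 4. -/
open scoped Classical

/-! A c-partition has nonempty disjoint parts, so at most `|V|` of them. In `C_4` no vertex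
dominates, but two adjacent vertices do, so the partition into singletons is a c-partition. -/

section CPartition

variable {V : Type*} [Fintype V] (G : SimpleGraph V)

theorem IsCPartition.card_le {π : Finset (Finset V)} (hπ : IsCPartition G π) :
    π.card ≤ Fintype.card V :=
  (Finset.card_le_card_biUnion (f := id) hπ.2.1 hπ.1).trans (Finset.card_le_univ _)

theorem isCPartition_singletons
    (h : ∀ v, IsDomSet G {v} ∨ ∃ w, IsCoalition G {v} {w}) :
    IsCPartition G (Finset.univ.image fun v : V => {v}) := by
  refine ⟨?_, ?_, fun v => ⟨{v}, by simp⟩, ?_⟩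
  · simp
  · simp [eq_comm]
  · simp only [Finset.mem_image, Finset.mem_univ, true_and, forall_exists_index,
      forall_apply_eq_imp_iff, exists_exists_eq_and]
    intro v
    exact (h v).imp (fun hv => ⟨v, rfl, hv⟩) id

theorem coalitionNumber_eq_card_of_singletons
    (h : ∀ v, IsDomSet G {v} ∨ ∃ w, IsCoalition G {v} {w}) :
    coalitionNumber G = Fintype.card V := by
  have hbdd : ∀ k ∈ {k | ∃ π, IsCPartition G π ∧ k = π.card}, k ≤ Fintype.card V := by
    rintro k ⟨π, hπ, rfl⟩
    exact hπ.card_le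
  have hmem : Fintype.card V ∈ {k | ∃ π, IsCPartition G π ∧ k = π.card} :=
    ⟨_, isCPartition_singletons G h, by
      rw [Finset.card_image_of_injective _ Finset.singleton_injective, Finset.card_univ]⟩
  exact le_antisymm (csSup_le ⟨_, hmem⟩ hbdd) (le_csSup ⟨_, hbdd⟩ hmem)

end CPartition

theorem cycleGraph_four_singleton_coalition (v : Fin 4) :
    IsCoalition (SimpleGraph.cycleGraph 4) {v} {v + 1} := by
  simp only [IsCoalition, IsDomSet, ne_eq, Finset.singleton_inj, Finset.mem_union,
    Finset.mem_singleton, exists_eq_or_imp, exists_eq_left]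
  revert v
  decide

/-- `C(C_4) = 4`. -/
theorem stmt_12 : coalitionNumber (SimpleGraph.cycleGraph 4) = 4 :=
  coalitionNumber_eq_card_of_singletons _
    (fun v => Or.inr ⟨v + 1, cycleGraph_four_singleton_coalition v⟩)
end
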